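/- (Uniqueness of the pushout up to proper isomorphism; group case.) Assume G, A, B and all extension groups below are locally compact Hausdorff, (Σ, ι, p) is a compatible extension of G by A, and f : A → B is a continuous G-equivariant group homomorphism. If (Σ₁, f₁) and (Σ₂, f₂) are both f-pushouts of (Σ, ι, p), then there exists an isomorphism of topological groups g : Σ₁ → Σ₂ such that g ∘ ι₁ = ι₂, p₂ ∘ g = p₁, and g ∘ f₁ = f₂. -/

import Mathlib

open Topology

section Core

variable {G S A : Type*}

/-- A compatible extension `A → S → G` of the topological group `G` by the
abelian topological group `A`, which carries an action of `G`:
`ι` is a continuous injective group homomorphism which is a homeomorphism onto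
its image, `p` is a continuous open surjective homomorphism whose kernel is
exactly the image of `ι`, and conjugation in `S` induces the given action of
`G` on `A`. -/
structure IsCompatibleExtension
    [Group G] [TopologicalSpace G]
    [AddCommGroup A] [TopologicalSpace A] [DistribMulAction G A]
    [Group S] [TopologicalSpace S]
    (ι : A → S) (p : S →* G) : Prop where
  /-- The middle term is a topological group. -/
  topGroup : IsTopologicalGroup S
  /-- `ι` is a group homomorphism (from the additive group `A`). -/
  ι_hom : ∀ a a', ι (a + a') = ι a * ι a'
  /-- `ι` is a homeomorphism onto its image (in particular continuous and
  injective). -/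
  ι_embedding : IsEmbedding ι
  /-- `p` is continuous. -/
  p_cont : Continuous p
  /-- `p` is open. -/
  p_open : IsOpenMap p
  /-- `p` is surjective. -/
  p_surj : Function.Surjective p
  /-- The image of `ι` is exactly the kernel of `p`. -/
  range_ι : Set.range ι = ⇑p ⁻¹' {1}
  /-- The extension is compatible: conjugation induces the given `G`-action. -/
  compat : ∀ (σ : S) (a : A), σ * ι a * σ⁻¹ = ι (p σ • a)

/-- Given a compatible extension `(S, ι, p)` of `G` by `A` and a continuous
`G`-equivariant homomorphism `f : A → B`, the pair `(S', f')` is an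
`f`-pushout of `(S, ι, p)` if `(S', ι', p')` is a compatible extension of `G`
by `B` and `f' : S → S'` is a continuous homomorphism satisfying
`ι' ∘ f = f' ∘ ι` and `p' ∘ f' = p`. -/
structure IsPushout
    {G A B S S' : Type*} [Group G] [TopologicalSpace G]
    [AddCommGroup A] [TopologicalSpace A] [DistribMulAction G A]
    [AddCommGroup B] [TopologicalSpace B] [DistribMulAction G B]
    [Group S] [TopologicalSpace S] [Group S'] [TopologicalSpace S']
    (ι : A → S) (p : S →* G) (f : A → B)
    (ι' : B → S') (p' : S' →* G) (f' : S → S') : Prop where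
  /-- `(S', ι', p')` is a compatible extension of `G` by `B`. -/
  ext : IsCompatibleExtension ι' p'
  /-- `f'` is continuous. -/
  f'_cont : Continuous f'
  /-- `f'` is a group homomorphism. -/
  f'_hom : ∀ σ τ, f' (σ * τ) = f' σ * f' τ
  /-- `ι' ∘ f = f' ∘ ι`. -/
  comm_ι : ∀ a, ι' (f a) = f' (ι a)
  /-- `p' ∘ f' = p`. -/
  comm_p : ∀ σ, p' (f' σ) = p σ

end Core

/-! Both pushouts are quotients of the same space `B × S`, through the maps
`(b, σ) ↦ ιᵢ b * fᵢ σ`. Each of these is a continuous open surjection, multiplicative for the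
semidirect product law `(b, σ) * (b', σ') = (b + p σ • b', σ * σ')`, and its fibres are
described by `ι`, `p` and `f` alone: `(b, ι a * σ)` and `(b + f a, σ)` have the same image, and
these are the only identifications. Two quotient maps with the same fibres differ by a
homeomorphism, and the semidirect product law makes it a group isomorphism. -/

open Filter

theorem Topology.IsQuotientMap.exists_homeomorph_comp_eq {X Y₁ Y₂ : Type*} [TopologicalSpace X]
    [TopologicalSpace Y₁] [TopologicalSpace Y₂] {f₁ : X → Y₁} {f₂ : X → Y₂}
    (h₁ : IsQuotientMap f₁) (h₂ : IsQuotientMap f₂) (h : ∀ x x', f₁ x = f₁ x' ↔ f₂ x = f₂ x') :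
    ∃ g : Y₁ ≃ₜ Y₂, ∀ x, g (f₁ x) = f₂ x := by
  set g : Y₁ → Y₂ := f₂ ∘ Function.surjInv h₁.surjective
  set g' : Y₂ → Y₁ := f₁ ∘ Function.surjInv h₂.surjective
  have hg (x : X) : g (f₁ x) = f₂ x := (h _ x).1 (Function.surjInv_eq h₁.surjective _)
  have hg' (x : X) : g' (f₂ x) = f₁ x := (h _ x).2 (Function.surjInv_eq h₂.surjective _)
  refine ⟨{ toFun := g, invFun := g'
            left_inv := h₁.surjective.forall.2 fun x => by rw [hg, hg']
            right_inv := h₂.surjective.forall.2 fun x => by rw [hg', hg]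
            continuous_toFun := h₁.continuous_iff.2 ?_
            continuous_invFun := h₂.continuous_iff.2 ?_ }, hg⟩
  · exact (funext hg : g ∘ f₁ = f₂) ▸ h₂.continuous
  · exact (funext hg' : g' ∘ f₂ = f₁) ▸ h₁.continuous

namespace IsCompatibleExtension

variable {G A S : Type*} [Group G] [TopologicalSpace G] [AddCommGroup A] [TopologicalSpace A]
  [DistribMulAction G A] [Group S] [TopologicalSpace S] {ι : A → S} {p : S →* G}
  (hE : IsCompatibleExtension ι p)
include hE

theorem ι_zero : ι 0 = 1 :=
  mul_left_cancel (a := ι 0) (by rw [← hE.ι_hom, add_zero, mul_one])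

theorem mem_range_ι_iff {s : S} : s ∈ Set.range ι ↔ p s = 1 := by
  rw [hE.range_ι]
  rfl

theorem p_ι (a : A) : p (ι a) = 1 :=
  hE.mem_range_ι_iff.1 ⟨a, rfl⟩

end IsCompatibleExtension

def pushoutMap {B S S' : Type*} [Mul S'] (ι' : B → S') (f' : S → S') (w : B × S) : S' :=
  ι' w.1 * f' w.2

namespace IsPushout

variable {G A B S S' : Type*} [Group G] [TopologicalSpace G]
  [AddCommGroup A] [TopologicalSpace A] [DistribMulAction G A]
  [AddCommGroup B] [TopologicalSpace B] [DistribMulAction G B]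
  [Group S] [TopologicalSpace S] [Group S'] [TopologicalSpace S']
  {ι : A → S} {p : S →* G} {f : A → B} {ι' : B → S'} {p' : S' →* G} {f' : S → S'}
  (hP : IsPushout ι p f ι' p' f')
include hP

theorem f'_one : f' 1 = 1 :=
  (MonoidHom.mk' f' hP.f'_hom).map_one

theorem pushoutMap_inl (b : B) : pushoutMap ι' f' (b, 1) = ι' b := by
  rw [pushoutMap, hP.f'_one, mul_one]

theorem pushoutMap_inr (σ : S) : pushoutMap ι' f' (0, σ) = f' σ := by
  rw [pushoutMap, hP.ext.ι_zero, one_mul]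

theorem p'_pushoutMap (w : B × S) : p' (pushoutMap ι' f' w) = p w.2 := by
  rw [pushoutMap, map_mul, hP.ext.p_ι, one_mul, hP.comm_p]

theorem pushoutMap_mul (w w' : B × S) :
    pushoutMap ι' f' w * pushoutMap ι' f' w' =
      pushoutMap ι' f' (w.1 + p w.2 • w'.1, w.2 * w'.2) := by
  have hconj : f' w.2 * ι' w'.1 * (f' w.2)⁻¹ = ι' (p w.2 • w'.1) := by
    rw [hP.ext.compat, hP.comm_p]
  simp only [pushoutMap]
  rw [hP.ext.ι_hom, ← hconj, hP.f'_hom]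
  group

theorem pushoutMap_ι_mul (a : A) (b : B) (σ : S) :
    pushoutMap ι' f' (b, ι a * σ) = pushoutMap ι' f' (b + f a, σ) := by
  simp only [pushoutMap]
  rw [hP.f'_hom, ← hP.comm_ι, hP.ext.ι_hom, mul_assoc]

theorem exists_pushoutMap_eq {x : S'} {σ : S} (hσ : p σ = p' x) :
    ∃ b, pushoutMap ι' f' (b, σ) = x := by
  obtain ⟨b, hb⟩ := hP.ext.mem_range_ι_iff.2 (show p' (x * (f' σ)⁻¹) = 1 by
    rw [map_mul, map_inv, hP.comm_p, hσ, mul_inv_cancel])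
  exact ⟨b, by rw [pushoutMap, hb, inv_mul_cancel_right]⟩

theorem surjective_pushoutMap (hE : IsCompatibleExtension ι p) :
    Function.Surjective (pushoutMap ι' f') := fun x =>
  let ⟨σ, hσ⟩ := hE.p_surj (p' x)
  let ⟨b, hb⟩ := hP.exists_pushoutMap_eq hσ
  ⟨(b, σ), hb⟩

theorem pushoutMap_eq_pushoutMap_iff (hE : IsCompatibleExtension ι p) (b b' : B) (σ σ' : S) :
    pushoutMap ι' f' (b, σ) = pushoutMap ι' f' (b', σ') ↔ ∃ a, σ = ι a * σ' ∧ b' = b + f a := by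
  constructor
  · intro h
    have hpσ : p σ = p σ' := by
      simpa only [hP.p'_pushoutMap] using congrArg p' h
    obtain ⟨a, ha⟩ := hE.mem_range_ι_iff.2 (show p (σ * σ'⁻¹) = 1 by
      rw [map_mul, map_inv, hpσ, mul_inv_cancel])
    have hσ : σ = ι a * σ' := by rw [ha, inv_mul_cancel_right]
    rw [hσ, hP.pushoutMap_ι_mul] at h
    exact ⟨a, hσ, (hP.ext.ι_embedding.injective (mul_right_cancel h)).symm⟩
  · rintro ⟨a, rfl, rfl⟩
    exact hP.pushoutMap_ι_mul a b σ'

theorem continuous_pushoutMap : Continuous (pushoutMap ι' f') :=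
  have := hP.ext.topGroup
  (hP.ext.ι_embedding.continuous.comp continuous_fst).mul (hP.f'_cont.comp continuous_snd)

theorem nhds_one_le_map_pushoutMap (hE : IsCompatibleExtension ι p) :
    𝓝 (1 : S') ≤ map (pushoutMap ι' f') (𝓝 (0, 1)) := by
  have := hP.ext.topGroup
  refine le_map fun W hW => ?_
  obtain ⟨U, hU, V, hV, hUV⟩ := mem_nhds_prod_iff.1 hW
  obtain ⟨U', hU', hU'U⟩ : ∃ U' ∈ 𝓝 (1 : S'), ι' ⁻¹' U' ⊆ U := by
    rwa [← hP.ext.ι_zero, ← mem_comap, ← hP.ext.ι_embedding.nhds_eq_comap]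
  obtain ⟨Z, hZ, hZZ⟩ := exists_nhds_one_split hU'
  -- Over `σ ∈ V₀`, a point `x ∈ Z` is `ι' b * f' σ` with `ι' b = x * (f' σ)⁻¹ ∈ Z * Z ⊆ U'`.
  set V₀ := V ∩ (fun σ => (f' σ)⁻¹) ⁻¹' Z
  have hV₀ : V₀ ∈ 𝓝 (1 : S) :=
    inter_mem hV (hP.f'_cont.inv.continuousAt.preimage_mem_nhds
      (by rwa [Pi.inv_apply, hP.f'_one, inv_one]))
  have hN : Z ∩ p' ⁻¹' (p '' V₀) ∈ 𝓝 (1 : S') :=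
    inter_mem hZ (hP.ext.p_cont.continuousAt.preimage_mem_nhds
      (by simpa only [map_one] using hE.p_open.image_mem_nhds hV₀))
  refine mem_of_superset hN ?_
  rintro x ⟨hxZ, σ, ⟨hσV, hσZ⟩, hσx⟩
  obtain ⟨b, rfl⟩ := hP.exists_pushoutMap_eq hσx
  refine ⟨(b, σ), hUV ⟨hU'U ?_, hσV⟩, rfl⟩
  simpa only [Set.mem_preimage, pushoutMap, mul_inv_cancel_right] using hZZ _ hxZ _ hσZ

theorem isOpenMap_pushoutMap [ContinuousAdd B] [ContinuousConstSMul G B]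
    (hE : IsCompatibleExtension ι p) : IsOpenMap (pushoutMap ι' f') := by
  have := hE.topGroup
  have := hP.ext.topGroup
  refine IsOpenMap.of_nhds_le fun w => ?_
  set L : B × S → B × S := fun v => (w.1 + p w.2 • v.1, w.2 * v.2)
  have hL : Continuous L :=
    (continuous_const.add (continuous_fst.const_smul _)).prodMk
      (continuous_const.mul continuous_snd)
  have hL₀ : L (0, 1) = w := by simp [L]
  calc 𝓝 (pushoutMap ι' f' w)
      = map (pushoutMap ι' f' w * ·) (𝓝 1) := (map_mul_left_nhds_one _).symm
    _ ≤ map (pushoutMap ι' f' w * ·) (map (pushoutMap ι' f') (𝓝 (0, 1))) :=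
        map_mono (hP.nhds_one_le_map_pushoutMap hE)
    _ = map (pushoutMap ι' f') (map L (𝓝 (0, 1))) := by
        simp only [map_map]
        congr 1
        funext v
        exact hP.pushoutMap_mul w v
    _ ≤ map (pushoutMap ι' f') (𝓝 w) := map_mono (hL₀ ▸ hL.tendsto (0, 1))

theorem isQuotientMap_pushoutMap [ContinuousAdd B] [ContinuousConstSMul G B]
    (hE : IsCompatibleExtension ι p) : IsQuotientMap (pushoutMap ι' f') :=
  (hP.isOpenMap_pushoutMap hE).isQuotientMap hP.continuous_pushoutMap
    (hP.surjective_pushoutMap hE)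

end IsPushout

theorem pushout_unique_up_to_proper_iso_general
    {G A B S S₁ S₂ : Type*} [Group G] [TopologicalSpace G]
    [AddCommGroup A] [TopologicalSpace A] [DistribMulAction G A]
    [AddCommGroup B] [TopologicalSpace B] [IsTopologicalAddGroup B]
    [DistribMulAction G B] [ContinuousSMul G B]
    [Group S] [TopologicalSpace S]
    [Group S₁] [TopologicalSpace S₁] [Group S₂] [TopologicalSpace S₂]
    (ι : A → S) (p : S →* G) (hE : IsCompatibleExtension ι p) (f : A → B)
    (ι₁ : B → S₁) (p₁ : S₁ →* G) (f₁ : S → S₁)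
    (ι₂ : B → S₂) (p₂ : S₂ →* G) (f₂ : S → S₂)
    (h₁ : IsPushout ι p f ι₁ p₁ f₁)
    (h₂ : IsPushout ι p f ι₂ p₂ f₂) :
    ∃ g : S₁ ≃ₜ S₂,
      (∀ x y : S₁, g (x * y) = g x * g y) ∧
      (∀ b : B, g (ι₁ b) = ι₂ b) ∧
      (∀ x : S₁, p₂ (g x) = p₁ x) ∧
      (∀ σ : S, g (f₁ σ) = f₂ σ) := by
  obtain ⟨g, hg⟩ := (h₁.isQuotientMap_pushoutMap hE).exists_homeomorph_comp_eq
    (h₂.isQuotientMap_pushoutMap hE) fun w w' => by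
      rw [h₁.pushoutMap_eq_pushoutMap_iff hE, h₂.pushoutMap_eq_pushoutMap_iff hE]
  refine ⟨g, ?_, fun b => ?_, ?_, fun σ => ?_⟩
  · intro x y
    obtain ⟨w, rfl⟩ := h₁.surjective_pushoutMap hE x
    obtain ⟨w', rfl⟩ := h₁.surjective_pushoutMap hE y
    rw [h₁.pushoutMap_mul, hg, hg, hg, h₂.pushoutMap_mul]
  · rw [← h₁.pushoutMap_inl, hg, h₂.pushoutMap_inl]
  · intro x
    obtain ⟨w, rfl⟩ := h₁.surjective_pushoutMap hE x
    rw [hg, h₁.p'_pushoutMap, h₂.p'_pushoutMap]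
  · rw [← h₁.pushoutMap_inr, hg, h₂.pushoutMap_inr]

/-- (Uniqueness of the pushout up to proper isomorphism;
group case.)  Let `(Σ, ι, p)` be a compatible extension of `G` by `A` (all
groups locally compact Hausdorff) and `f : A → B` a continuous
`G`-equivariant group homomorphism.  If `(Σ₁, f₁)` and `(Σ₂, f₂)` are both
`f`-pushouts of `(Σ, ι, p)`, then there is an isomorphism of topological
groups `g : Σ₁ → Σ₂` with `g ∘ ι₁ = ι₂`, `p₂ ∘ g = p₁` and `g ∘ f₁ = f₂`. -/
theorem pushout_unique_up_to_proper_iso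
    {G A B S S₁ S₂ : Type*} [Group G] [TopologicalSpace G] [IsTopologicalGroup G]
    [LocallyCompactSpace G] [T2Space G]
    [AddCommGroup A] [TopologicalSpace A] [IsTopologicalAddGroup A]
    [LocallyCompactSpace A] [T2Space A]
    [DistribMulAction G A] [ContinuousSMul G A]
    [AddCommGroup B] [TopologicalSpace B] [IsTopologicalAddGroup B]
    [LocallyCompactSpace B] [T2Space B]
    [DistribMulAction G B] [ContinuousSMul G B]
    [Group S] [TopologicalSpace S] [IsTopologicalGroup S]
    [LocallyCompactSpace S] [T2Space S]
    [Group S₁] [TopologicalSpace S₁] [LocallyCompactSpace S₁] [T2Space S₁]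
    [Group S₂] [TopologicalSpace S₂] [LocallyCompactSpace S₂] [T2Space S₂]
    (ι : A → S) (p : S →* G) (hE : IsCompatibleExtension ι p)
    (f : A → B) (hf_cont : Continuous f)
    (hf_hom : ∀ a a', f (a + a') = f a + f a')
    (hf_equiv : ∀ (g : G) (a : A), f (g • a) = g • f a)
    (ι₁ : B → S₁) (p₁ : S₁ →* G) (f₁ : S → S₁)
    (ι₂ : B → S₂) (p₂ : S₂ →* G) (f₂ : S → S₂)
    (h₁ : IsPushout ι p f ι₁ p₁ f₁)
    (h₂ : IsPushout ι p f ι₂ p₂ f₂) :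
    ∃ g : S₁ ≃ₜ S₂,
      (∀ x y : S₁, g (x * y) = g x * g y) ∧
      (∀ b : B, g (ι₁ b) = ι₂ b) ∧
      (∀ x : S₁, p₂ (g x) = p₁ x) ∧
      (∀ σ : S, g (f₁ σ) = f₂ σ) :=
  pushout_unique_up_to_proper_iso_general ι p hE f ι₁ p₁ f₁ ι₂ p₂ f₂ h₁ h₂
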